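/- arXiv:math/0301273 — 4 statements merged into one kernel-verified Lean document; each statement's English description precedes it below -/
import Mathlib

section
/- For three even formal variables x_0, x_1, x_2 and two odd formal variables φ_1, φ_2, the formal delta function satisfies the two-term identity: x_1^{-1} δ((x_2 + x_0 + φ_1 φ_2)/x_1) = x_2^{-1} δ((x_1 - x_0 - φ_1 φ_2)/x_2), where δ(x) = ∑_{n∈ℤ} x^n and binomial expressions (x ± y)^n are expanded in nonnegative powers of the second listed variable, and f(x + φ_1φ_2) means f(x) + φ_1φ_2 f'(x). -/
/-- Generalized binomial coefficient `C(n, k)` for `n : ℤ` (zero for `k < 0`). -/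
noncomputable def genBinom (n : ℤ) (k : ℤ) : ℂ :=
  if 0 ≤ k then (∏ i ∈ Finset.range k.toNat, ((n : ℂ) - (i : ℂ))) / (Nat.factorial k.toNat)
  else 0

/-- Coefficient of `x₀^a x₁^b x₂^c` in the body (`1`-component) of
`x₁⁻¹ δ((x₂ + x₀ + φ₁φ₂)/x₁)`, where `(x₂+x₀)^n` is expanded in nonnegative powers of
`x₀` (the second listed variable). -/
noncomputable def lhs6Body (a b c : ℤ) : ℂ :=
  if a + b + c = -1 then genBinom (-b - 1) a else 0

/-- Coefficient of `φ₁φ₂ x₀^a x₁^b x₂^c` in `x₁⁻¹ δ((x₂ + x₀ + φ₁φ₂)/x₁)`, coming from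
`f(x + φ₁φ₂) = f(x) + φ₁φ₂ f'(x)`. -/
noncomputable def lhs6Soul (a b c : ℤ) : ℂ :=
  if a + b + c = -2 then ((-b - 1 : ℤ) : ℂ) * genBinom (-b - 2) a else 0

/-- Coefficient of `x₀^a x₁^b x₂^c` in the body of `x₂⁻¹ δ((x₁ - x₀ - φ₁φ₂)/x₂)`,
with `(x₁-x₀)^n` expanded in nonnegative powers of `x₀`. -/
noncomputable def rhs6Body (a b c : ℤ) : ℂ :=
  if a + b + c = -1 then (-1 : ℂ) ^ a * genBinom (-c - 1) a else 0

/-- Coefficient of `φ₁φ₂ x₀^a x₁^b x₂^c` in `x₂⁻¹ δ((x₁ - x₀ - φ₁φ₂)/x₂)`. -/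
noncomputable def rhs6Soul (a b c : ℤ) : ℂ :=
  if a + b + c = -2 then ((c + 1 : ℤ) : ℂ) * (-1 : ℂ) ^ a * genBinom (-c - 2) a else 0

lemma key1 (a : ℕ) (b : ℂ) :
    ∏ i ∈ Finset.range a, ((-b - 1) - (i : ℂ)) =
    (-1) ^ a * ∏ i ∈ Finset.range a, (((a : ℂ) + b) - (i : ℂ)) := by
  induction a with
  | zero => simp
  | succ n ih =>
    rw [Finset.prod_range_succ, ih, Finset.prod_range_succ']
    have h : ∀ i ∈ Finset.range n,
        ((((n + 1 : ℕ) : ℂ)) + b) - (((i + 1 : ℕ)) : ℂ) = ((n : ℂ) + b) - i := by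
      intro i _; push_cast; ring
    rw [Finset.prod_congr rfl h]
    push_cast
    ring

lemma key2 (a : ℕ) (b : ℂ) :
    (∏ i ∈ Finset.range a, (((a : ℂ) + b + 1) - (i : ℂ))) * (b + 1) =
    (∏ i ∈ Finset.range a, (((a : ℂ) + b) - (i : ℂ))) * ((a : ℂ) + b + 1) := by
  have h1 := Finset.prod_range_succ (fun i : ℕ => ((a : ℂ) + b + 1) - (i : ℂ)) a
  have h2 := Finset.prod_range_succ' (fun i : ℕ => ((a : ℂ) + b + 1) - (i : ℂ)) a
  have h : ∀ i ∈ Finset.range a,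
      ((a : ℂ) + b + 1) - (((i + 1 : ℕ)) : ℂ) = ((a : ℂ) + b) - i := by
    intro i _; push_cast; ring
  rw [Finset.prod_congr rfl h] at h2
  have key := h1.symm.trans h2
  have e1 : ((a : ℂ) + b + 1) - (a : ℂ) = b + 1 := by ring
  have e2 : ((a : ℂ) + b + 1) - ((0 : ℕ) : ℂ) = (a : ℂ) + b + 1 := by push_cast; ring
  rw [e1, e2] at key
  exact key

theorem stmt6_body (a b c : ℤ) (h : a + b + c = -1) :
    genBinom (-b - 1) a = (-1 : ℂ) ^ a * genBinom (-c - 1) a := by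
  by_cases ha : 0 ≤ a
  · lift a to ℕ using ha with n
    simp only [genBinom, Int.toNat_natCast, le_refl, if_pos, Int.natCast_nonneg,
      zpow_natCast]
    have hc : (-c - 1 : ℤ) = (n : ℤ) + b := by omega
    rw [hc]
    have e1 : ∀ i ∈ Finset.range n, (((-b - 1 : ℤ) : ℂ) - (i : ℂ)) =
        ((-(b : ℂ) - 1) - (i : ℂ)) := by intro i _; push_cast; ring
    have e2 : ∀ i ∈ Finset.range n, ((((n : ℤ) + b : ℤ) : ℂ) - (i : ℂ)) =
        (((n : ℂ) + (b : ℂ)) - (i : ℂ)) := by intro i _; push_cast; ring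
    rw [Finset.prod_congr rfl e1, Finset.prod_congr rfl e2, key1]
    ring
  · simp only [genBinom, if_neg ha, mul_zero]

theorem stmt6_soul (a b c : ℤ) (h : a + b + c = -2) :
    ((-b - 1 : ℤ) : ℂ) * genBinom (-b - 2) a =
    ((c + 1 : ℤ) : ℂ) * (-1 : ℂ) ^ a * genBinom (-c - 2) a := by
  by_cases ha : 0 ≤ a
  · lift a to ℕ using ha with n
    simp only [genBinom, Int.toNat_natCast, le_refl, if_pos, Int.natCast_nonneg,
      zpow_natCast]
    have hc : (-c - 2 : ℤ) = (n : ℤ) + b := by omega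
    rw [hc]
    have e1 : ∀ i ∈ Finset.range n, (((-b - 2 : ℤ) : ℂ) - (i : ℂ)) =
        ((-((b : ℂ) + 1) - 1) - (i : ℂ)) := by intro i _; push_cast; ring
    have e2 : ∀ i ∈ Finset.range n, ((((n : ℤ) + b : ℤ) : ℂ) - (i : ℂ)) =
        (((n : ℂ) + (b : ℂ)) - (i : ℂ)) := by intro i _; push_cast; ring
    have e3 : ∀ i ∈ Finset.range n, (((n : ℂ) + ((b : ℂ) + 1)) - (i : ℂ)) =
        (((n : ℂ) + (b : ℂ) + 1) - (i : ℂ)) := by intro i _; ring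
    rw [Finset.prod_congr rfl e1, Finset.prod_congr rfl e2, key1,
      Finset.prod_congr rfl e3]
    have hc1 : ((c + 1 : ℤ) : ℂ) = -(n : ℂ) - (b : ℂ) - 1 := by
      have : (c : ℤ) = -2 - (n : ℤ) - b := by omega
      rw [this]; push_cast; ring
    have hb1 : ((-b - 1 : ℤ) : ℂ) = -(b : ℂ) - 1 := by push_cast; ring
    rw [hc1, hb1]
    linear_combination (-(-1 : ℂ) ^ n / (Nat.factorial n : ℂ)) * key2 n b
  · simp only [genBinom, if_neg ha, mul_zero]

/-- the two-term formal delta function identity with odd variables,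
`x₁⁻¹ δ((x₂ + x₀ + φ₁φ₂)/x₁) = x₂⁻¹ δ((x₁ - x₀ - φ₁φ₂)/x₂)`,
stated as equality of all coefficients (in both the `1`- and the `φ₁φ₂`-sector). -/
theorem stmt_6 :
    (∀ a b c : ℤ, lhs6Body a b c = rhs6Body a b c) ∧
    (∀ a b c : ℤ, lhs6Soul a b c = rhs6Soul a b c) := by
  constructor
  · intro a b c
    unfold lhs6Body rhs6Body
    split_ifs with h
    · exact stmt6_body a b c h
    · rfl
  · intro a b c
    unfold lhs6Soul rhs6Soul
    split_ifs with h
    · exact stmt6_soul a b c h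
    · rfl
end

section
/- For three even formal variables x_0, x_1, x_2 and two odd formal variables φ_1, φ_2, the three-term delta function identity holds: x_0^{-1} δ((x_1 - x_2 - φ_1φ_2)/x_0) - x_0^{-1} δ((x_2 - x_1 + φ_1φ_2)/(-x_0)) = x_2^{-1} δ((x_1 - x_0 - φ_1φ_2)/x_2). -/
/-- Coefficient of `x₀^a x₁^b x₂^c` in the body of `x₀⁻¹ δ((x₁ - x₂ - φ₁φ₂)/x₀)`,
with `(x₁-x₂)^n` expanded in nonnegative powers of `x₂`. -/
noncomputable def termABody (a b c : ℤ) : ℂ :=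
  if a + b + c = -1 then (-1 : ℂ) ^ c * genBinom (-a - 1) c else 0

/-- `φ₁φ₂`-coefficient of `x₀⁻¹ δ((x₁ - x₂ - φ₁φ₂)/x₀)`. -/
noncomputable def termASoul (a b c : ℤ) : ℂ :=
  if a + b + c = -2 then ((a + 1 : ℤ) : ℂ) * (-1 : ℂ) ^ c * genBinom (-a - 2) c else 0

/-- Coefficient of `x₀^a x₁^b x₂^c` in the body of `x₀⁻¹ δ((x₂ - x₁ + φ₁φ₂)/(-x₀))`,
with `(x₂-x₁)^n` expanded in nonnegative powers of `x₁`. -/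
noncomputable def termBBody (a b c : ℤ) : ℂ :=
  if a + b + c = -1 then (-1 : ℂ) ^ (a + 1) * (-1 : ℂ) ^ b * genBinom (-a - 1) b else 0

/-- `φ₁φ₂`-coefficient of `x₀⁻¹ δ((x₂ - x₁ + φ₁φ₂)/(-x₀))`. -/
noncomputable def termBSoul (a b c : ℤ) : ℂ :=
  if a + b + c = -2 then
    ((-a - 1 : ℤ) : ℂ) * (-1 : ℂ) ^ (a + 1) * (-1 : ℂ) ^ b * genBinom (-a - 2) b
  else 0

/-- Coefficient of `x₀^a x₁^b x₂^c` in the body of `x₂⁻¹ δ((x₁ - x₀ - φ₁φ₂)/x₂)`,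
with `(x₁-x₀)^n` expanded in nonnegative powers of `x₀`. -/
noncomputable def termCBody (a b c : ℤ) : ℂ :=
  if a + b + c = -1 then (-1 : ℂ) ^ a * genBinom (-c - 1) a else 0

/-- `φ₁φ₂`-coefficient of `x₂⁻¹ δ((x₁ - x₀ - φ₁φ₂)/x₂)`. -/
noncomputable def termCSoul (a b c : ℤ) : ℂ :=
  if a + b + c = -2 then ((c + 1 : ℤ) : ℂ) * (-1 : ℂ) ^ a * genBinom (-c - 2) a else 0

lemma prod_natCast (n k : ℕ) :
    (∏ i ∈ Finset.range k, ((n:ℂ) - (i:ℂ))) = (k.factorial : ℂ) * n.choose k := by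
  induction k with
  | zero => simp
  | succ k ih =>
    rw [Finset.prod_range_succ, ih]
    rcases lt_or_ge k n with h | h
    · have h3 := congrArg (fun t : ℕ => (t : ℂ)) (Nat.choose_succ_right_eq n k)
      push_cast [Nat.cast_sub h.le] at h3
      push_cast [Nat.factorial_succ]
      linear_combination (-(k.factorial : ℂ)) * h3
    · rcases eq_or_lt_of_le h with h1 | h1
      · subst h1; simp
      · rw [Nat.choose_eq_zero_of_lt h1, Nat.choose_eq_zero_of_lt (by omega)]; simp

lemma prod_negCast (m k : ℕ) :
    (∏ i ∈ Finset.range k, ((-(m:ℂ) - 1) - (i:ℂ)))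
      = (-1:ℂ)^k * (k.factorial : ℂ) * (m+k).choose k := by
  induction k with
  | zero => simp
  | succ k ih =>
    rw [Finset.prod_range_succ, ih]
    have h3 := congrArg (fun t : ℕ => (t : ℂ)) (Nat.add_one_mul_choose_eq (m+k) k)
    push_cast at h3
    push_cast [Nat.factorial_succ, pow_succ, show m + (k+1) = (m+k)+1 by ring]
    linear_combination ((-1:ℂ)^k * k.factorial) * h3.symm

lemma factC (k : ℕ) : (k.factorial : ℂ) ≠ 0 := by
  exact_mod_cast k.factorial_ne_zero

lemma genBinom_neg {n k : ℤ} (hk : k < 0) : genBinom n k = 0 := by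
  simp [genBinom, not_le.2 hk]

lemma genBinom_natCast (n k : ℕ) : genBinom (n : ℤ) (k : ℤ) = (n.choose k : ℂ) := by
  rw [genBinom, if_pos (by positivity), Int.toNat_natCast]
  rw [show (((n:ℤ):ℂ)) = (n:ℂ) by push_cast; ring]
  rw [prod_natCast, mul_comm, mul_div_assoc, div_self (factC k), mul_one]

lemma genBinom_negCast (m k : ℕ) :
    genBinom (-(m:ℤ) - 1) (k : ℤ) = (-1:ℂ)^k * ((m+k).choose k : ℂ) := by
  rw [genBinom, if_pos (by positivity), Int.toNat_natCast]
  rw [show (((-(m:ℤ) - 1 : ℤ)):ℂ) = -(m:ℂ) - 1 by push_cast; ring]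
  rw [prod_negCast]
  field_simp [factC k]

lemma zpE (m : ℤ) (n : ℕ) (h : (m - n) % 2 = 0) : (-1:ℂ)^m = (-1:ℂ)^n := by
  obtain ⟨t, ht⟩ : ∃ t : ℤ, m = n + 2 * t := ⟨(m - n) / 2, by omega⟩
  rw [ht, zpow_add₀ (by norm_num : (-1:ℂ) ≠ 0), zpow_natCast, zpow_mul]
  norm_num

lemma chSymm (A B : ℕ) : (A + B).choose B = (A + B).choose A := by
  rw [← Nat.choose_symm (Nat.le_add_left B A)]
  congr 1
  omega

lemma hsq (B : ℕ) : ((-1:ℂ))^B * (-1:ℂ)^B = 1 := by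
  rw [← pow_add, show B + B = 2*B by ring, pow_mul]
  norm_num

theorem bodyAux (a b c : ℤ) (h : a + b + c = -1) :
    (-1 : ℂ) ^ c * genBinom (-a - 1) c
      - (-1 : ℂ) ^ (a + 1) * (-1 : ℂ) ^ b * genBinom (-a - 1) b
      = (-1 : ℂ) ^ a * genBinom (-c - 1) a := by
  rcases le_or_gt 0 a with ha | ha <;> rcases le_or_gt 0 b with hb | hb <;>
    rcases le_or_gt 0 c with hc | hc
  · omega
  · -- a≥0, b≥0, c<0
    obtain ⟨A, rfl⟩ := Int.eq_ofNat_of_zero_le ha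
    obtain ⟨B, rfl⟩ := Int.eq_ofNat_of_zero_le hb
    rw [genBinom_neg hc, show -(A:ℤ) - 1 = -((A:ℕ):ℤ) - 1 from rfl, genBinom_negCast,
      show -c - 1 = ((A + B : ℕ) : ℤ) by omega, show (A:ℤ) = ((A:ℕ):ℤ) from rfl,
      genBinom_natCast, zpE ((A:ℤ)+1) (A+1) (by omega), zpE ((B:ℤ)) B (by omega),
      zpE ((A:ℤ)) A (by omega), chSymm A B]
    linear_combination ((-1:ℂ)^A * ((A+B).choose A : ℂ)) * hsq B
  · -- a≥0, b<0, c≥0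
    obtain ⟨A, rfl⟩ := Int.eq_ofNat_of_zero_le ha
    obtain ⟨C, rfl⟩ := Int.eq_ofNat_of_zero_le hc
    rw [genBinom_neg hb, show -(A:ℤ) - 1 = -((A:ℕ):ℤ) - 1 from rfl,
      show -(C:ℤ) - 1 = -((C:ℕ):ℤ) - 1 from rfl, genBinom_negCast, genBinom_negCast,
      zpE ((C:ℤ)) C (by omega), zpE ((A:ℤ)) A (by omega),
      show C + A = A + C by ring, chSymm A C]
    linear_combination (((A+C).choose A : ℂ)) * hsq C - (((A+C).choose A : ℂ)) * hsq A
  · -- a≥0, b<0, c<0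
    obtain ⟨A, rfl⟩ := Int.eq_ofNat_of_zero_le ha
    obtain ⟨D, hD⟩ := Int.eq_ofNat_of_zero_le (show (0:ℤ) ≤ -c - 1 by omega)
    rw [genBinom_neg hb, genBinom_neg hc, hD, show (A:ℤ) = ((A:ℕ):ℤ) from rfl,
      genBinom_natCast, Nat.choose_eq_zero_of_lt (by omega)]
    simp
  · -- a<0, b≥0, c≥0
    obtain ⟨B, rfl⟩ := Int.eq_ofNat_of_zero_le hb
    obtain ⟨C, rfl⟩ := Int.eq_ofNat_of_zero_le hc
    rw [genBinom_neg ha, show -a - 1 = ((B + C : ℕ) : ℤ) by omega,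
      genBinom_natCast, genBinom_natCast, zpE ((C:ℤ)) C (by omega),
      zpE ((B:ℤ)) B (by omega), zpE (a+1) (B+C) (by omega), chSymm B C]
    linear_combination (-((-1:ℂ)^C * ((B+C).choose B : ℂ))) * hsq B
  · -- a<0, b≥0, c<0
    obtain ⟨B, rfl⟩ := Int.eq_ofNat_of_zero_le hb
    obtain ⟨N, hN⟩ := Int.eq_ofNat_of_zero_le (show (0:ℤ) ≤ -a - 1 by omega)
    rw [genBinom_neg ha, genBinom_neg hc, hN, genBinom_natCast,
      Nat.choose_eq_zero_of_lt (by omega)]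
    simp
  · -- a<0, b<0, c≥0
    obtain ⟨C, rfl⟩ := Int.eq_ofNat_of_zero_le hc
    obtain ⟨N, hN⟩ := Int.eq_ofNat_of_zero_le (show (0:ℤ) ≤ -a - 1 by omega)
    rw [genBinom_neg ha, genBinom_neg hb, hN, genBinom_natCast,
      Nat.choose_eq_zero_of_lt (by omega)]
    simp
  · omega

theorem soulAux (a b c : ℤ) (h : a + b + c = -2) :
    ((a + 1 : ℤ) : ℂ) * (-1 : ℂ) ^ c * genBinom (-a - 2) c
      - ((-a - 1 : ℤ) : ℂ) * (-1 : ℂ) ^ (a + 1) * (-1 : ℂ) ^ b * genBinom (-a - 2) b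
      = ((c + 1 : ℤ) : ℂ) * (-1 : ℂ) ^ a * genBinom (-c - 2) a := by
  rcases le_or_gt 0 a with ha | ha <;> rcases le_or_gt 0 b with hb | hb <;>
    rcases le_or_gt 0 c with hc | hc
  · omega
  · -- a≥0, b≥0, c<0
    obtain ⟨A, rfl⟩ := Int.eq_ofNat_of_zero_le ha
    obtain ⟨B, rfl⟩ := Int.eq_ofNat_of_zero_le hb
    have hc2 : c = -2 - (A:ℤ) - B := by omega
    subst hc2
    have h3 := congrArg (fun t : ℕ => (t : ℂ)) (Nat.add_one_mul_choose_eq (A+B) A)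
    push_cast [Nat.succ_eq_add_one] at h3
    rw [genBinom_neg (show (-2 - (A:ℤ) - B) < 0 by omega),
      show -(A:ℤ) - 2 = -(((A+1:ℕ)):ℤ) - 1 by push_cast; ring,
      genBinom_negCast, show -(-2 - (A:ℤ) - B) - 2 = ((A + B : ℕ) : ℤ) by push_cast; ring,
      show (A:ℤ) = ((A:ℕ):ℤ) from rfl, genBinom_natCast,
      zpE ((A:ℤ)+1) (A+1) (by omega), zpE ((B:ℤ)) B (by omega),
      zpE ((A:ℤ)) A (by omega), show A + 1 + B = (A+1) + B from rfl, chSymm (A+1) B]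
    push_cast
    rw [show (A+1)+B = A+B+1 by ring]
    linear_combination ((-1:ℂ)^A) * h3
      - ((A:ℂ)+1) * ((-1:ℂ)^A * (((A+B+1).choose (A+1)) : ℂ)) * hsq B
  · -- a≥0, b<0, c≥0
    obtain ⟨A, rfl⟩ := Int.eq_ofNat_of_zero_le ha
    obtain ⟨C, rfl⟩ := Int.eq_ofNat_of_zero_le hc
    have h3 := congrArg (fun t : ℕ => (t : ℂ)) (Nat.choose_succ_right_eq (A+C+1) A)
    push_cast [Nat.cast_sub (show A ≤ A+C+1 by omega)] at h3
    rw [genBinom_neg hb, show -(A:ℤ) - 2 = -(((A+1:ℕ)):ℤ) - 1 by push_cast; ring,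
      show -(C:ℤ) - 2 = -(((C+1:ℕ)):ℤ) - 1 by push_cast; ring,
      genBinom_negCast, genBinom_negCast,
      zpE ((C:ℤ)) C (by omega), zpE ((A:ℤ)) A (by omega),
      show (A+1) + C = A+C+1 by ring, show (C+1) + A = A+C+1 by ring,
      show (A+C+1).choose C = (A+C+1).choose (A+1) by
        rw [show A+C+1 = (A+1)+C by ring]; exact chSymm (A+1) C]
    push_cast
    linear_combination ((A:ℂ)+1) * (((A+C+1).choose (A+1)) : ℂ) * hsq C
      - ((C:ℂ)+1) * (((A+C+1).choose A) : ℂ) * hsq A + h3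
  · -- a≥0, b<0, c<0
    obtain ⟨A, rfl⟩ := Int.eq_ofNat_of_zero_le ha
    rcases eq_or_lt_of_le (show c ≤ -1 by omega) with h1 | h1
    · rw [genBinom_neg hb, genBinom_neg hc, h1]
      norm_num
    · obtain ⟨D, hD⟩ := Int.eq_ofNat_of_zero_le (show (0:ℤ) ≤ -c - 2 by omega)
      rw [genBinom_neg hb, genBinom_neg hc, hD, show (A:ℤ) = ((A:ℕ):ℤ) from rfl,
        genBinom_natCast, Nat.choose_eq_zero_of_lt (by omega)]
      simp
  · -- a<0, b≥0, c≥0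
    obtain ⟨B, rfl⟩ := Int.eq_ofNat_of_zero_le hb
    obtain ⟨C, rfl⟩ := Int.eq_ofNat_of_zero_le hc
    have ha2 : a = -2 - (B:ℤ) - C := by omega
    subst ha2
    rw [genBinom_neg (by omega : (-2 - (B:ℤ) - C) < 0),
      show -(-2 - (B:ℤ) - C) - 2 = ((B + C : ℕ) : ℤ) by push_cast; ring,
      genBinom_natCast, genBinom_natCast, zpE ((C:ℤ)) C (by omega),
      zpE ((B:ℤ)) B (by omega), zpE (-2 - (B:ℤ) - C + 1) (B+C+1) (by omega), chSymm B C]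
    push_cast [pow_succ]
    linear_combination (((B:ℂ)+C+1) * (-1:ℂ)^C * ((B+C).choose B : ℂ)) * hsq B
  · -- a<0, b≥0, c<0
    obtain ⟨B, rfl⟩ := Int.eq_ofNat_of_zero_le hb
    rcases eq_or_lt_of_le (show a ≤ -1 by omega) with h1 | h1
    · rw [genBinom_neg ha, genBinom_neg hc, h1]
      norm_num
    · obtain ⟨N, hN⟩ := Int.eq_ofNat_of_zero_le (show (0:ℤ) ≤ -a - 2 by omega)
      rw [genBinom_neg ha, genBinom_neg hc, hN, genBinom_natCast,
        Nat.choose_eq_zero_of_lt (by omega)]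
      simp
  · -- a<0, b<0, c≥0
    obtain ⟨C, rfl⟩ := Int.eq_ofNat_of_zero_le hc
    rcases eq_or_lt_of_le (show a ≤ -1 by omega) with h1 | h1
    · rw [genBinom_neg ha, genBinom_neg hb, h1]
      norm_num
    · obtain ⟨N, hN⟩ := Int.eq_ofNat_of_zero_le (show (0:ℤ) ≤ -a - 2 by omega)
      rw [genBinom_neg ha, genBinom_neg hb, hN, genBinom_natCast,
        Nat.choose_eq_zero_of_lt (by omega)]
      simp
  · omega

/-- the three-term formal delta function identity with odd variables,
`x₀⁻¹ δ((x₁-x₂-φ₁φ₂)/x₀) - x₀⁻¹ δ((x₂-x₁+φ₁φ₂)/(-x₀)) = x₂⁻¹ δ((x₁-x₀-φ₁φ₂)/x₂)`,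
stated as equality of all coefficients in both the `1`- and the `φ₁φ₂`-sector. -/
theorem stmt_7 :
    (∀ a b c : ℤ, termABody a b c - termBBody a b c = termCBody a b c) ∧
    (∀ a b c : ℤ, termASoul a b c - termBSoul a b c = termCSoul a b c) := by
  constructor
  · intro a b c
    by_cases h : a + b + c = -1
    · simp only [termABody, termBBody, termCBody, if_pos h]
      exact bodyAux a b c h
    · simp [termABody, termBBody, termCBody, if_neg h]
  · intro a b c
    by_cases h : a + b + c = -2
    · simp only [termASoul, termBSoul, termCSoul, if_pos h]
      exact soulAux a b c h
    · simp [termASoul, termBSoul, termCSoul, if_neg h]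
end

section
/- In an N=1 NS-VOSA with odd formal variables, the exponentiated translation formula holds: Y(e^{x_0 L(-1) + φ_0 G(-1/2)} v, (x,φ)) = Y(v, (x_0 + x + φ_0 φ, φ_0 + φ)), equivalently e^{x_0 ∂/∂x + φ_0(∂/∂φ + φ ∂/∂x)} Y(v,(x,φ)) = Y(v,(x_0 + x + φ_0φ, φ_0 + φ)), as formal power series in the even variable x_0 and odd variable φ_0. -/
/-- Generalized binomial coefficient `C(m, k)` for `m : ℤ`, `k : ℕ`. -/
noncomputable def cbinom (m : ℤ) (k : ℕ) : ℂ :=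
  (∏ i ∈ Finset.range k, ((m : ℂ) - (i : ℂ))) / (Nat.factorial k)

lemma cbinom_succ_eq (m : ℤ) (k : ℕ) :
    cbinom m (k+1) = (((m : ℂ) - k) / ((k : ℂ) + 1)) * cbinom m k := by
  have h1 : (Nat.factorial k : ℂ) ≠ 0 := Nat.cast_ne_zero.mpr (Nat.factorial_ne_zero k)
  have h2 : ((k : ℂ) + 1) ≠ 0 := Nat.cast_add_one_ne_zero k
  unfold cbinom
  rw [Finset.prod_range_succ, Nat.factorial_succ]
  push_cast
  field_simp

/-- In an N=1 NS-VOSA with odd formal variables, the exponentiated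
translation formula holds:
`Y(e^(x₀L(-1) + φ₀G(-1/2)) v, (x,φ)) = Y(v, (x₀ + x + φ₀φ, φ₀ + φ))`.

Since `L(-1)` and `G(-1/2)` commute, `e^(x₀L(-1)+φ₀G(-1/2)) = e^(x₀L(-1))(1 + φ₀G(-1/2))`,
and the identity is equivalent to its coefficients at `x₀^k φ₀^ε x^(-n-1) φ^δ`:
with `a v n = vₙ`, `b v n = v_(n-1/2)`, `Eₖ = L(-1)^k / k!`, they read
`(Eₖ v)ₙ = C(k-n-1, k) v_(n-k)`, `(Eₖ v)_(n-1/2) = C(k-n-1,k) v_(n-k-1/2)`,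
`(Eₖ G(-1/2) v)ₙ = C(k-n-1,k) v_(n-k-1/2)`, and
`(Eₖ G(-1/2) v)_(n-1/2) = (k-n) C(k-n-1,k) v_(n-k-1)`.
The hypotheses are the `L(-1)`- and `G(-1/2)`-derivative properties in mode form. -/
theorem stmt_12 {V : Type*} [AddCommGroup V] [Module ℂ V]
    (a b : V → ℤ → Module.End ℂ V)
    (hsm : ∀ (c : ℂ) (v : V) (n : ℤ), a (c • v) n = c • a v n)
    (hsm' : ∀ (c : ℂ) (v : V) (n : ℤ), b (c • v) n = c • b v n)
    (Lneg Gneg : Module.End ℂ V)   -- L(-1) and G(-1/2)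
    (hL1 : ∀ (v : V) (n : ℤ), a (Lneg v) n = (-(n : ℂ)) • a v (n - 1))
    (hL2 : ∀ (v : V) (n : ℤ), b (Lneg v) n = (-(n : ℂ)) • b v (n - 1))
    (hG1 : ∀ (v : V) (n : ℤ), a (Gneg v) n = b v n)
    (hG2 : ∀ (v : V) (n : ℤ), b (Gneg v) n = (-(n : ℂ)) • a v (n - 1)) :
    ∀ (v : V) (k : ℕ) (n : ℤ),
      (a ((Nat.factorial k : ℂ)⁻¹ • (Lneg ^ k) v) n
        = cbinom ((k : ℤ) - n - 1) k • a v (n - k)) ∧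
      (b ((Nat.factorial k : ℂ)⁻¹ • (Lneg ^ k) v) n
        = cbinom ((k : ℤ) - n - 1) k • b v (n - k)) ∧
      (a ((Nat.factorial k : ℂ)⁻¹ • (Lneg ^ k) (Gneg v)) n
        = cbinom ((k : ℤ) - n - 1) k • b v (n - k)) ∧
      (b ((Nat.factorial k : ℂ)⁻¹ • (Lneg ^ k) (Gneg v)) n
        = (((k : ℂ) - n) * cbinom ((k : ℤ) - n - 1) k) • a v (n - k - 1)) := by
  intro v k
  induction k generalizing v with
  | zero =>
    intro n
    refine ⟨?_, ?_, ?_, ?_⟩ <;>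
      simp [cbinom, hG1, hG2, Nat.factorial]
  | succ k ih =>
    intro n
    have fne : (Nat.factorial k : ℂ) ≠ 0 := Nat.cast_ne_zero.mpr (Nat.factorial_ne_zero k)
    have h2 : ((k : ℂ) + 1) ≠ 0 := Nat.cast_add_one_ne_zero k
    obtain ⟨ih1, ih2, ih3, ih4⟩ := ih v (n - 1)
    rw [hsm] at ih1 ih3
    rw [hsm'] at ih2 ih4
    have r1 := (inv_smul_eq_iff₀ fne).mp ih1
    have r2 := (inv_smul_eq_iff₀ fne).mp ih2
    have r3 := (inv_smul_eq_iff₀ fne).mp ih3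
    have r4 := (inv_smul_eq_iff₀ fne).mp ih4
    have pk : ∀ w : V, (Lneg ^ (k+1)) w = Lneg ((Lneg ^ k) w) := by
      intro w; rw [pow_succ']; rfl
    have e1 : (((k+1 : ℕ)) : ℤ) - n - 1 = (k : ℤ) - n := by push_cast; ring
    have e2 : (k : ℤ) - (n - 1) - 1 = (k : ℤ) - n := by ring
    have harg : n - 1 - (k : ℤ) = n - ((k : ℤ) + 1) := by ring
    have harg' : n - ((k+1 : ℕ) : ℤ) = n - 1 - (k : ℤ) := by push_cast; ring
    have harg'' : n - ((k+1 : ℕ) : ℤ) - 1 = n - 1 - (k : ℤ) - 1 := by push_cast; ring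
    refine ⟨?_, ?_, ?_, ?_⟩
    · rw [hsm, pk, hL1, r1, smul_smul, smul_smul, smul_smul, harg', e2]
      congr 1
      rw [e1, cbinom_succ_eq, Nat.factorial_succ]
      push_cast
      field_simp
      ring
    · rw [hsm', pk, hL2, r2, smul_smul, smul_smul, smul_smul, harg', e2]
      congr 1
      rw [e1, cbinom_succ_eq, Nat.factorial_succ]
      push_cast
      field_simp
      ring
    · rw [hsm, pk, hL1, r3, smul_smul, smul_smul, smul_smul, harg', e2]
      congr 1
      rw [e1, cbinom_succ_eq, Nat.factorial_succ]
      push_cast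
      field_simp
      ring
    · rw [hsm', pk, hL2, r4, smul_smul, smul_smul, smul_smul, harg'', e2]
      congr 1
      rw [e1, cbinom_succ_eq, Nat.factorial_succ]
      push_cast
      field_simp
      ring
end

section
/- In an N=1 NS-VOSA with odd formal variables, skew-supersymmetry holds: for u, v of homogeneous sign, e^{x L(-1) + φ G(-1/2)} Y(v,(-x,-φ)) u = (-1)^{η(u)η(v)} Y(u,(x,φ)) v, as an identity in V((x))[φ]. -/
lemma cbinom_zero (m : ℤ) : cbinom m 0 = 1 := by simp [cbinom]

lemma cbinom_neg_one (i : ℕ) : cbinom (-1) i = (-1) ^ i := by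
  induction i with
  | zero => simp [cbinom]
  | succ k ih =>
    have hfac : ((Nat.factorial k : ℕ) : ℂ) ≠ 0 := Nat.cast_ne_zero.mpr k.factorial_ne_zero
    have h : (∏ j ∈ Finset.range k, (((-1 : ℤ) : ℂ) - (j : ℂ))) / ((Nat.factorial k : ℕ) : ℂ)
        = (-1) ^ k := ih
    have hnum : (∏ j ∈ Finset.range k, (((-1 : ℤ) : ℂ) - (j : ℂ)))
        = (-1) ^ k * ((Nat.factorial k : ℕ) : ℂ) := (div_eq_iff hfac).mp h
    show (∏ j ∈ Finset.range (k+1), (((-1 : ℤ) : ℂ) - (j : ℂ))) / (Nat.factorial (k+1) : ℂ)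
        = (-1) ^ (k+1)
    rw [Finset.prod_range_succ, hnum, Nat.factorial_succ]
    have hk1 : ((k : ℂ) + 1) ≠ 0 := by
      have := k.cast_add_one_ne_zero (R := ℂ); simpa using this
    push_cast
    field_simp
    ring

lemma alt_inv_sum (m : ℕ) :
    ∑ k ∈ Finset.range (m+1),
      ((Nat.factorial k : ℂ))⁻¹ * ((-1 : ℂ) ^ (m - k) * ((Nat.factorial (m - k) : ℂ))⁻¹)
    = if m = 0 then 1 else 0 := by
  rw [← Finset.sum_range_reflect]
  have h1 : ∀ j ∈ Finset.range (m+1),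
      ((Nat.factorial (m + 1 - 1 - j) : ℂ))⁻¹ *
        ((-1 : ℂ) ^ (m - (m + 1 - 1 - j)) * ((Nat.factorial (m - (m + 1 - 1 - j)) : ℂ))⁻¹)
      = ((-1 : ℂ) ^ j * (m.choose j : ℂ)) * ((Nat.factorial m : ℂ))⁻¹ := by
    intro j hj
    have hjm : j ≤ m := by simpa [Nat.lt_succ_iff] using Finset.mem_range.mp hj
    have e1 : m + 1 - 1 - j = m - j := by omega
    have e2 : m - (m - j) = j := by omega
    rw [e1, e2]
    have hch : ((m.choose j : ℂ)) * (Nat.factorial j : ℂ) * (Nat.factorial (m - j) : ℂ)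
        = (Nat.factorial m : ℂ) := by
      exact_mod_cast congrArg (Nat.cast : ℕ → ℂ) (Nat.choose_mul_factorial_mul_factorial hjm)
    have f1 : ((Nat.factorial j : ℕ) : ℂ) ≠ 0 := Nat.cast_ne_zero.mpr j.factorial_ne_zero
    have f2 : ((Nat.factorial (m - j) : ℕ) : ℂ) ≠ 0 := Nat.cast_ne_zero.mpr (m - j).factorial_ne_zero
    have f3 : ((Nat.factorial m : ℕ) : ℂ) ≠ 0 := Nat.cast_ne_zero.mpr m.factorial_ne_zero
    field_simp
    linear_combination (-1 : ℂ) * hch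
  rw [Finset.sum_congr rfl h1, ← Finset.sum_mul]
  have h2 : ((∑ i ∈ Finset.range (m+1), ((-1 : ℤ) ^ i * (m.choose i : ℤ)) : ℤ) : ℂ)
      = ((if m = 0 then (1:ℤ) else 0 : ℤ) : ℂ) := by
    exact_mod_cast congrArg (Int.cast : ℤ → ℂ) Int.alternating_sum_range_choose
  push_cast at h2
  rw [h2]
  by_cases hm : m = 0
  · subst hm; simp
  · simp [hm]

lemma core_diag {V : Type*} [AddCommGroup V] [Module ℂ V] (M : ℕ)
    (Lf : ℕ → V) (hF : ∀ j, M ≤ j → Lf j = 0) :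
    ∑ k ∈ Finset.range M, ∑ i ∈ Finset.range M,
      (((Nat.factorial k : ℂ))⁻¹ * ((-1 : ℂ) ^ i * ((Nat.factorial i : ℂ))⁻¹)) • Lf (k + i)
    = Lf 0 := by
  have h1 : ∀ k ∈ Finset.range M,
      (∑ i ∈ Finset.range M,
        (((Nat.factorial k : ℂ))⁻¹ * ((-1 : ℂ) ^ i * ((Nat.factorial i : ℂ))⁻¹)) • Lf (k + i))
      = ∑ i ∈ Finset.range (M - k),
        (((Nat.factorial k : ℂ))⁻¹ * ((-1 : ℂ) ^ i * ((Nat.factorial i : ℂ))⁻¹)) • Lf (k + i) := by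
    intro k hk
    refine (Finset.sum_subset (Finset.range_subset_range.mpr (Nat.sub_le M k)) ?_).symm
    intro i hi hni
    have hk' := Finset.mem_range.mp hk
    have hi' := Finset.mem_range.mp hi
    have hni' : ¬ i < M - k := fun h => hni (Finset.mem_range.mpr h)
    have : M ≤ k + i := by omega
    rw [hF _ this, smul_zero]
  rw [Finset.sum_congr rfl h1,
    ← Finset.sum_range_diag_flip M (fun k i =>
      (((Nat.factorial k : ℂ))⁻¹ * ((-1 : ℂ) ^ i * ((Nat.factorial i : ℂ))⁻¹)) • Lf (k + i))]
  have h2 : ∀ m ∈ Finset.range M,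
      (∑ k ∈ Finset.range (m+1),
        (((Nat.factorial k : ℂ))⁻¹ * ((-1 : ℂ) ^ (m - k) * ((Nat.factorial (m - k) : ℂ))⁻¹)) • Lf (k + (m - k)))
      = (if m = 0 then (1:ℂ) else 0) • Lf m := by
    intro m hm
    have h3 : ∀ k ∈ Finset.range (m+1),
        (((Nat.factorial k : ℂ))⁻¹ * ((-1 : ℂ) ^ (m - k) * ((Nat.factorial (m - k) : ℂ))⁻¹)) • Lf (k + (m - k))
        = (((Nat.factorial k : ℂ))⁻¹ * ((-1 : ℂ) ^ (m - k) * ((Nat.factorial (m - k) : ℂ))⁻¹)) • Lf m := by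
      intro k hk
      have : k + (m - k) = m := by
        have := Finset.mem_range.mp hk; omega
      rw [this]
    rw [Finset.sum_congr rfl h3, ← Finset.sum_smul, alt_inv_sum m]
  rw [Finset.sum_congr rfl h2]
  by_cases hM : M = 0
  · subst hM
    simp [hF 0 le_rfl]
  · rw [Finset.sum_eq_single_of_mem 0 (Finset.mem_range.mpr (Nat.pos_of_ne_zero hM))]
    · simp
    · intro m _ hm0
      simp [hm0]

/-- In an N=1 NS-VOSA with odd formal variables, skew-supersymmetry
holds: for `u`, `v` of homogeneous sign,
`e^(xL(-1) + φG(-1/2)) Y(v,(-x,-φ)) u = (-1)^(η u · η v) Y(u,(x,φ)) v` in `V((x))[φ]`.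

Modes: `a v n = vₙ`, `b v n = v_(n-1/2)`; `Lneg = L(-1)`, `Gneg = G(-1/2)`.
The NS-VOSA axioms are recorded by: truncation, the vacuum property, the creation
property, the `G(-1/2)`-derivative property (in mode form), and the Jacobi identity in
coefficient form (its four `φ`-sectors, for the homogeneous pair `(u,v)` of parities
`(p,q)`).  The conclusion is the coefficient (of `x^(-n-1)` and of `φ x^(-n-1)`) form
of skew-supersymmetry. -/
theorem stmt_14 {V : Type*} [AddCommGroup V] [Module ℂ V]
    (a b : V → ℤ → Module.End ℂ V)
    (pt : ZMod 2 → Submodule ℂ V)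
    (vac : V)
    (Lneg Gneg : Module.End ℂ V)
    (trunc : ∀ u w : V, ∃ N : ℤ, ∀ n : ℤ, N ≤ n → a u n w = 0 ∧ b u n w = 0)
    (vacuum : ∀ n : ℤ, a vac n = if n = -1 then 1 else 0)
    (vacuum' : ∀ n : ℤ, b vac n = 0)
    (creation : ∀ (w : V) (n : ℤ), 0 ≤ n → a w n vac = 0 ∧ b w n vac = 0)
    (creation' : ∀ w : V, a w (-1) vac = w)
    (creation'' : ∀ w : V, b w (-1) vac = Gneg w)
    (hL1 : ∀ (w : V) (n : ℤ), a (Lneg w) n = (-(n : ℂ)) • a w (n - 1))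
    (hL2 : ∀ (w : V) (n : ℤ), b (Lneg w) n = (-(n : ℂ)) • b w (n - 1))
    (hG1 : ∀ (w : V) (n : ℤ), a (Gneg w) n = b w n)
    (hG2 : ∀ (w : V) (n : ℤ), b (Gneg w) n = (-(n : ℂ)) • a w (n - 1))
    (p q : ZMod 2) (u v : V) (hu : u ∈ pt p) (hv : v ∈ pt q)
    -- Jacobi identity, sector `1`:
    (jac₁ : ∀ (l m n : ℤ) (w : V),
      (∑ᶠ i : ℕ, ((-1 : ℂ) ^ i * cbinom l i) • a u (l + m - i) (a v (n + i) w))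
        - (((-1 : ℂ) ^ (p.val * q.val) * (-1 : ℂ) ^ l) •
            ∑ᶠ i : ℕ, ((-1 : ℂ) ^ i * cbinom l i) • a v (l + n - i) (a u (m + i) w))
        = ∑ᶠ i : ℕ, cbinom m i • a (a u (l + i) v) (m + n - i) w)
    -- Jacobi identity, sector `φ₁`:
    (jac₂ : ∀ (l m n : ℤ) (w : V),
      (∑ᶠ i : ℕ, ((-1 : ℂ) ^ i * cbinom l i) • b u (l + m - i) (a v (n + i) w))
        - (((-1 : ℂ) ^ ((p.val + 1) * q.val) * (-1 : ℂ) ^ l) •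
            ∑ᶠ i : ℕ, ((-1 : ℂ) ^ i * cbinom l i) • a v (l + n - i) (b u (m + i) w))
        = ∑ᶠ i : ℕ, cbinom m i • a (b u (l + i) v) (m + n - i) w)
    -- Jacobi identity, sector `φ₂`:
    (jac₃ : ∀ (l m n : ℤ) (w : V),
      ((-1 : ℂ) ^ p.val •
          ∑ᶠ i : ℕ, ((-1 : ℂ) ^ i * cbinom l i) • a u (l + m - i) (b v (n + i) w))
        - (((-1 : ℂ) ^ (p.val * q.val) * (-1 : ℂ) ^ l) •
            ∑ᶠ i : ℕ, ((-1 : ℂ) ^ i * cbinom l i) • b v (l + n - i) (a u (m + i) w))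
        = ∑ᶠ i : ℕ, cbinom m i •
            (b (a u (l + i) v) (m + n - i) w - a (b u (l + i) v) (m + n - i) w))
    -- Jacobi identity, sector `φ₁φ₂`:
    (jac₄ : ∀ (l m n : ℤ) (w : V),
      ((-1 : ℂ) ^ (p.val + 1) •
          ∑ᶠ i : ℕ, ((-1 : ℂ) ^ i * cbinom l i) • b u (l + m - i) (b v (n + i) w))
        + ((-(l : ℂ)) •
            ∑ᶠ i : ℕ, ((-1 : ℂ) ^ i * cbinom (l - 1) i) • a u (l + m - 1 - i) (a v (n + i) w))
        - (((-1 : ℂ) ^ (p.val * q.val + q.val) * (-1 : ℂ) ^ l) •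
            ∑ᶠ i : ℕ, ((-1 : ℂ) ^ i * cbinom l i) • b v (l + n - i) (b u (m + i) w))
        - (((-1 : ℂ) ^ (p.val * q.val) * (l : ℂ) * (-1 : ℂ) ^ l) •
            ∑ᶠ i : ℕ, ((-1 : ℂ) ^ i * cbinom (l - 1) i) • a v (l + n - 1 - i) (a u (m + i) w))
        = (∑ᶠ i : ℕ, cbinom m i • b (b u (l + i) v) (m + n - i) w)
          + ∑ᶠ i : ℕ, (((m : ℂ) - i) * cbinom m i) • a (a u (l + i) v) (m + n - 1 - i) w) :
    -- Conclusion: skew-supersymmetry, in coefficient form.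
    ∀ n : ℤ,
      (∑ᶠ k : ℕ, ((-1 : ℂ) ^ (n + 1) * (-1 : ℂ) ^ k * (Nat.factorial k : ℂ)⁻¹) •
          (Lneg ^ k) (a v (n + k) u)
        = ((-1 : ℂ) ^ (p.val * q.val)) • a u n v) ∧
      (∑ᶠ k : ℕ, ((-1 : ℂ) ^ (n + 1) * (-1 : ℂ) ^ k * (Nat.factorial k : ℂ)⁻¹) •
          (Gneg ((Lneg ^ k) (a v (n + k) u)) - (Lneg ^ k) (b v (n + k) u))
        = ((-1 : ℂ) ^ (p.val * q.val)) • b u n v) := by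
  
  intro n
  have hm1 : (-1 : ℂ) ≠ 0 := by norm_num
  -- creation expansion for `a`
  have avac : ∀ (k : ℕ) (w : V), a w (-(k:ℤ)-1) vac = ((Nat.factorial k : ℂ))⁻¹ • (Lneg ^ k) w := by
    intro k
    induction k with
    | zero => intro w; simpa using creation' w
    | succ k ih =>
      intro w
      have hne : ((k:ℂ) + 1) ≠ 0 := k.cast_add_one_ne_zero
      have h2 : a (Lneg w) (-(k:ℤ)-1) vac = ((k:ℂ)+1) • a w (-(k:ℤ)-2) vac := by
        have h := congrArg (fun (f : Module.End ℂ V) => f vac) (hL1 w (-(k:ℤ)-1))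
        simp only [LinearMap.smul_apply] at h
        rw [h]
        rw [show (-(k:ℤ)-1-1) = (-(k:ℤ)-2) by ring]
        congr 1
        push_cast
        ring
      have h3 : a w (-(k:ℤ)-2) vac = ((k:ℂ)+1)⁻¹ • a (Lneg w) (-(k:ℤ)-1) vac := by
        rw [h2, smul_smul, inv_mul_cancel₀ hne, one_smul]
      rw [show -(((k+1:ℕ)):ℤ)-1 = -(k:ℤ)-2 by push_cast; ring, h3, ih (Lneg w), smul_smul]
      have hpow : (Lneg ^ (k+1)) w = (Lneg ^ k) (Lneg w) := by
        rw [pow_succ, Module.End.mul_apply]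
      rw [hpow]
      congr 1
      rw [Nat.factorial_succ]
      push_cast
      rw [mul_inv]
  have bvac : ∀ (k : ℕ) (w : V), b w (-(k:ℤ)-1) vac
      = ((Nat.factorial k : ℂ))⁻¹ • (Lneg ^ k) (Gneg w) := by
    intro k w
    rw [← hG1 w (-(k:ℤ)-1)]
    exact avac k (Gneg w)
  obtain ⟨N1, hN1⟩ := trunc v u
  obtain ⟨N2, hN2⟩ := trunc u v
  obtain ⟨M, hM⟩ : ∃ M : ℕ, ∀ j : ℕ, M ≤ j → max N1 N2 ≤ n + (j:ℤ) :=
    ⟨(max N1 N2 - n).toNat, fun j hj => by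
      have h1 : max N1 N2 - n ≤ (j:ℤ) := Int.toNat_le.mp hj
      linarith⟩
  have hAvanish : ∀ j : ℕ, M ≤ j → a u (n + (j:ℤ)) v = 0 ∧ b u (n + (j:ℤ)) v = 0 := by
    intro j hj
    exact hN2 _ (le_trans (le_max_right N1 N2) (hM j hj))
  have hVvanish : ∀ j : ℕ, M ≤ j → a v (n + (j:ℤ)) u = 0 ∧ b v (n + (j:ℤ)) u = 0 := by
    intro j hj
    exact hN1 _ (le_trans (le_max_left N1 N2) (hM j hj))
  have fs : ∀ (f : ℕ → V), (∀ k, M ≤ k → f k = 0) →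
      ∑ᶠ k : ℕ, f k = ∑ k ∈ Finset.range M, f k := by
    intro f hf
    apply finsum_eq_finset_sum_of_support_subset
    intro k hk
    simp only [Finset.coe_range, Set.mem_Iio]
    by_contra hcon
    exact hk (hf k (Nat.le_of_not_lt hcon))
  have hpowapp : ∀ (k i : ℕ) (x : V), (Lneg ^ k) ((Lneg ^ i) x) = (Lneg ^ (k + i)) x := by
    intro k i x; rw [pow_add, Module.End.mul_apply]
  -- the sign algebra
  have hts : ∀ k : ℕ, ((-1:ℂ) ^ (p.val * q.val) * (-1:ℂ) ^ (n + (k:ℤ) + 1)) *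
      ((-1:ℂ) ^ (p.val * q.val) * (-1:ℂ) ^ (n + (k:ℤ))) = -1 := by
    intro k
    have hYY : (-1:ℂ) ^ (n + (k:ℤ)) * (-1:ℂ) ^ (n + (k:ℤ)) = 1 := by
      rw [← mul_zpow]; norm_num
    have hP : (-1:ℂ) ^ (p.val * q.val) * (-1:ℂ) ^ (p.val * q.val) = 1 := by
      rw [← mul_pow]; norm_num
    rw [zpow_add_one₀ hm1]
    linear_combination (-((-1:ℂ) ^ (n + (k:ℤ)) * (-1:ℂ) ^ (n + (k:ℤ)))) * hP - hYY
  have coefid : ∀ k i : ℕ,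
      ((-1:ℂ) ^ (n+1) * (-1:ℂ) ^ k * ((Nat.factorial k : ℂ))⁻¹) *
        (((-1:ℂ) ^ (p.val * q.val) * (-1:ℂ) ^ (n + (k:ℤ) + 1)) *
          ((-1:ℂ) ^ i * ((Nat.factorial i : ℂ))⁻¹))
      = (-1:ℂ) ^ (p.val * q.val) *
          (((Nat.factorial k : ℂ))⁻¹ * ((-1:ℂ) ^ i * ((Nat.factorial i : ℂ))⁻¹)) := by
    intro k i
    have hX2 : (-1:ℂ) ^ (n + (k:ℤ) + 1) = (-1:ℂ) ^ (n + 1) * (-1:ℂ) ^ k := by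
      rw [show n + (k:ℤ) + 1 = (n + 1) + (k:ℤ) by ring, zpow_add₀ hm1, zpow_natCast]
    have hX1 : (-1:ℂ) ^ (n+1) * (-1:ℂ) ^ (n+1) = 1 := by rw [← mul_zpow]; norm_num
    have hK : (-1:ℂ) ^ k * (-1:ℂ) ^ k = 1 := by rw [← mul_pow]; norm_num
    rw [hX2]
    linear_combination
      ((-1:ℂ) ^ (p.val * q.val) * ((Nat.factorial k : ℂ))⁻¹ *
        ((-1:ℂ) ^ i * ((Nat.factorial i : ℂ))⁻¹) * ((-1:ℂ) ^ k * (-1:ℂ) ^ k)) * hX1 +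
      ((-1:ℂ) ^ (p.val * q.val) * ((Nat.factorial k : ℂ))⁻¹ *
        ((-1:ℂ) ^ i * ((Nat.factorial i : ℂ))⁻¹)) * hK
  -- the two key consequences of the Jacobi identity
  have I' : ∀ k : ℕ, a v (n + (k:ℤ)) u
      = ((-1:ℂ) ^ (p.val * q.val) * (-1:ℂ) ^ (n + (k:ℤ) + 1)) •
        ∑ i ∈ Finset.range M, ((-1:ℂ) ^ i * ((Nat.factorial i : ℂ))⁻¹) •
          (Lneg ^ i) (a u (n + (k:ℤ) + (i:ℤ)) v) := by
    intro k
    have hj := jac₁ (n + (k:ℤ)) (-1) 0 vac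
    have e1 : (∑ᶠ i : ℕ, ((-1 : ℂ) ^ i * cbinom (n + (k:ℤ)) i) •
        a u (n + (k:ℤ) + -1 - (i:ℤ)) (a v ((0:ℤ) + (i:ℤ)) vac)) = 0 := by
      apply finsum_eq_zero_of_forall_eq_zero
      intro i
      rw [(creation v ((0:ℤ) + (i:ℤ)) (by positivity)).1, map_zero, smul_zero]
    have e2 : (∑ᶠ i : ℕ, ((-1 : ℂ) ^ i * cbinom (n + (k:ℤ)) i) •
        a v (n + (k:ℤ) + 0 - (i:ℤ)) (a u (-1 + (i:ℤ)) vac)) = a v (n + (k:ℤ)) u := by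
      rw [finsum_eq_single _ 0 (fun i hi => by
        rw [(creation u (-1 + (i:ℤ)) (by omega)).1, map_zero, smul_zero])]
      simp [cbinom_zero, creation']
    have e3 : (∑ᶠ i : ℕ, cbinom (-1) i •
        a (a u (n + (k:ℤ) + (i:ℤ)) v) (-1 + 0 - (i:ℤ)) vac)
        = ∑ i ∈ Finset.range M, ((-1:ℂ) ^ i * ((Nat.factorial i : ℂ))⁻¹) •
          (Lneg ^ i) (a u (n + (k:ℤ) + (i:ℤ)) v) := by
      have he : ∀ i : ℕ, cbinom (-1) i •
          a (a u (n + (k:ℤ) + (i:ℤ)) v) (-1 + 0 - (i:ℤ)) vac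
          = ((-1:ℂ) ^ i * ((Nat.factorial i : ℂ))⁻¹) •
            (Lneg ^ i) (a u (n + (k:ℤ) + (i:ℤ)) v) := by
        intro i
        rw [show ((-1:ℤ) + 0 - (i:ℤ)) = -(i:ℤ) - 1 by ring, avac i, cbinom_neg_one, smul_smul]
      rw [finsum_congr he]
      apply fs
      intro i hi
      have hz : a u (n + (k:ℤ) + (i:ℤ)) v = 0 := by
        have h := (hAvanish (k + i) (le_trans hi (Nat.le_add_left i k))).1
        rwa [show (n + ((k + i : ℕ) : ℤ)) = n + (k:ℤ) + (i:ℤ) by push_cast; ring] at h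
      rw [hz, map_zero, smul_zero]
    rw [e1, e2, e3, zero_sub] at hj
    rw [← hj, smul_neg, smul_smul, hts k, neg_smul, one_smul, neg_neg]
  have J' : ∀ k : ℕ, b v (n + (k:ℤ)) u
      = ((-1:ℂ) ^ (p.val * q.val) * (-1:ℂ) ^ (n + (k:ℤ) + 1)) •
        ∑ i ∈ Finset.range M, ((-1:ℂ) ^ i * ((Nat.factorial i : ℂ))⁻¹) •
          ((Lneg ^ i) (Gneg (a u (n + (k:ℤ) + (i:ℤ)) v))
            - (Lneg ^ i) (b u (n + (k:ℤ) + (i:ℤ)) v)) := by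
    intro k
    have hj := jac₃ (n + (k:ℤ)) (-1) 0 vac
    have e1 : (∑ᶠ i : ℕ, ((-1 : ℂ) ^ i * cbinom (n + (k:ℤ)) i) •
        a u (n + (k:ℤ) + -1 - (i:ℤ)) (b v ((0:ℤ) + (i:ℤ)) vac)) = 0 := by
      apply finsum_eq_zero_of_forall_eq_zero
      intro i
      rw [(creation v ((0:ℤ) + (i:ℤ)) (by positivity)).2, map_zero, smul_zero]
    have e2 : (∑ᶠ i : ℕ, ((-1 : ℂ) ^ i * cbinom (n + (k:ℤ)) i) •
        b v (n + (k:ℤ) + 0 - (i:ℤ)) (a u (-1 + (i:ℤ)) vac)) = b v (n + (k:ℤ)) u := by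
      rw [finsum_eq_single _ 0 (fun i hi => by
        rw [(creation u (-1 + (i:ℤ)) (by omega)).1, map_zero, smul_zero])]
      simp [cbinom_zero, creation']
    have e3 : (∑ᶠ i : ℕ, cbinom (-1) i •
        (b (a u (n + (k:ℤ) + (i:ℤ)) v) (-1 + 0 - (i:ℤ)) vac
          - a (b u (n + (k:ℤ) + (i:ℤ)) v) (-1 + 0 - (i:ℤ)) vac))
        = ∑ i ∈ Finset.range M, ((-1:ℂ) ^ i * ((Nat.factorial i : ℂ))⁻¹) •
          ((Lneg ^ i) (Gneg (a u (n + (k:ℤ) + (i:ℤ)) v))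
            - (Lneg ^ i) (b u (n + (k:ℤ) + (i:ℤ)) v)) := by
      have he : ∀ i : ℕ, cbinom (-1) i •
          (b (a u (n + (k:ℤ) + (i:ℤ)) v) (-1 + 0 - (i:ℤ)) vac
            - a (b u (n + (k:ℤ) + (i:ℤ)) v) (-1 + 0 - (i:ℤ)) vac)
          = ((-1:ℂ) ^ i * ((Nat.factorial i : ℂ))⁻¹) •
            ((Lneg ^ i) (Gneg (a u (n + (k:ℤ) + (i:ℤ)) v))
              - (Lneg ^ i) (b u (n + (k:ℤ) + (i:ℤ)) v)) := by
        intro i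
        rw [show ((-1:ℤ) + 0 - (i:ℤ)) = -(i:ℤ) - 1 by ring, bvac i, avac i, cbinom_neg_one,
          ← smul_sub, smul_smul]
      rw [finsum_congr he]
      apply fs
      intro i hi
      have hz1 : a u (n + (k:ℤ) + (i:ℤ)) v = 0 := by
        have h := (hAvanish (k + i) (le_trans hi (Nat.le_add_left i k))).1
        rwa [show (n + ((k + i : ℕ) : ℤ)) = n + (k:ℤ) + (i:ℤ) by push_cast; ring] at h
      have hz2 : b u (n + (k:ℤ) + (i:ℤ)) v = 0 := by
        have h := (hAvanish (k + i) (le_trans hi (Nat.le_add_left i k))).2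
        rwa [show (n + ((k + i : ℕ) : ℤ)) = n + (k:ℤ) + (i:ℤ) by push_cast; ring] at h
      rw [hz1, hz2]
      simp
    rw [e1, smul_zero, e2, e3, zero_sub] at hj
    rw [← hj, smul_neg, smul_smul, hts k, neg_smul, one_smul, neg_neg]
  constructor
  · -- part 1
    rw [fs _ (fun k hk => by rw [(hVvanish k hk).1, map_zero, smul_zero])]
    have step : ∀ k ∈ Finset.range M,
        ((-1:ℂ) ^ (n + 1) * (-1:ℂ) ^ k * (Nat.factorial k : ℂ)⁻¹) •
          (Lneg ^ k) (a v (n + (k:ℤ)) u)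
        = ∑ i ∈ Finset.range M, (-1:ℂ) ^ (p.val * q.val) •
            ((((Nat.factorial k : ℂ))⁻¹ * ((-1:ℂ) ^ i * ((Nat.factorial i : ℂ))⁻¹)) •
              (Lneg ^ (k + i)) (a u (n + ((k + i : ℕ) : ℤ)) v)) := by
      intro k _
      rw [I' k, map_smul, smul_smul, map_sum, Finset.smul_sum]
      refine Finset.sum_congr rfl fun i _ => ?_
      rw [map_smul, smul_smul, hpowapp k i,
        show n + (k:ℤ) + (i:ℤ) = n + ((k + i : ℕ) : ℤ) by push_cast; ring, smul_smul]
      congr 1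
      linear_combination coefid k i
    rw [Finset.sum_congr rfl step]
    simp only [← Finset.smul_sum]
    congr 1
    have hcore := core_diag M (fun j => (Lneg ^ j) (a u (n + (j:ℤ)) v))
      (fun j hj => by
        show (Lneg ^ j) (a u (n + (j:ℤ)) v) = 0
        rw [(hAvanish j hj).1, map_zero])
    rw [hcore]
    simp
  · -- part 2
    rw [fs _ (fun k hk => by rw [(hVvanish k hk).1, (hVvanish k hk).2]; simp)]
    have step : ∀ k ∈ Finset.range M,
        ((-1:ℂ) ^ (n + 1) * (-1:ℂ) ^ k * (Nat.factorial k : ℂ)⁻¹) •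
          (Gneg ((Lneg ^ k) (a v (n + (k:ℤ)) u)) - (Lneg ^ k) (b v (n + (k:ℤ)) u))
        = ∑ i ∈ Finset.range M, (-1:ℂ) ^ (p.val * q.val) •
            ((((Nat.factorial k : ℂ))⁻¹ * ((-1:ℂ) ^ i * ((Nat.factorial i : ℂ))⁻¹)) •
              (Gneg ((Lneg ^ (k + i)) (a u (n + ((k + i : ℕ) : ℤ)) v))
                - ((Lneg ^ (k + i)) (Gneg (a u (n + ((k + i : ℕ) : ℤ)) v))
                  - (Lneg ^ (k + i)) (b u (n + ((k + i : ℕ) : ℤ)) v)))) := by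
      intro k _
      rw [I' k, J' k]
      simp only [map_smul]
      rw [← smul_sub, smul_smul]
      simp only [map_sum, map_smul, map_sub]
      rw [← Finset.sum_sub_distrib, Finset.smul_sum]
      refine Finset.sum_congr rfl fun i _ => ?_
      rw [← smul_sub, smul_smul]
      simp only [hpowapp]
      rw [show n + (k:ℤ) + (i:ℤ) = n + ((k + i : ℕ) : ℤ) by push_cast; ring, smul_smul]
      congr 1
      linear_combination coefid k i
    rw [Finset.sum_congr rfl step]
    simp only [← Finset.smul_sum]
    congr 1
    have hcore := core_diag M (fun j =>
        Gneg ((Lneg ^ j) (a u (n + (j:ℤ)) v))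
          - ((Lneg ^ j) (Gneg (a u (n + (j:ℤ)) v)) - (Lneg ^ j) (b u (n + (j:ℤ)) v)))
      (fun j hj => by
        show Gneg ((Lneg ^ j) (a u (n + (j:ℤ)) v))
          - ((Lneg ^ j) (Gneg (a u (n + (j:ℤ)) v)) - (Lneg ^ j) (b u (n + (j:ℤ)) v)) = 0
        rw [(hAvanish j hj).1, (hAvanish j hj).2]; simp)
    rw [hcore]
    simp
end
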